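/- Fix a real number x, and let ϱ_n(y) be defined by ϱ_0(y) = 1, ϱ_1(y) = y − x + 1/2, and ϱ_{n+1}(y) = (y − x + 1/2)·ϱ_n(y) − (n⁴/(4(2n+1)(2n−1)))·ϱ_{n−1}(y) for n ≥ 1. Then for every n ≥ 0 and every real y, ϱ_n(y) = (n!/(n+1)_n) · p_n(y − x + 1/2; 1/2, 1/2, 1/2, 1/2), where p_n(z; 1/2,1/2,1/2,1/2) = i^n n! Σ_{k=0}^n [((−n)_k (n+1)_k (1/2+iz)_k)/(k!)³] is the continuous Hahn polynomial with all four parameters equal to 1/2 (a complex expression whose value is real), and (n+1)_n = (2n)!/n!. -/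

import Mathlib

/-- The Pochhammer symbol `(a)_k = a (a+1) ⋯ (a+k-1)` for complex `a`. -/
noncomputable def pochC (a : ℂ) (k : ℕ) : ℂ := ∏ i ∈ Finset.range k, (a + i)

/-- The continuous Hahn polynomial with all four parameters equal to `1/2`:
`p_n(z; 1/2,1/2,1/2,1/2) = i^n n! Σ_{k=0}^n [((-n)_k (n+1)_k (1/2 + iz)_k) / (k!)³]`. -/
noncomputable def continuousHahnHalf (n : ℕ) (z : ℂ) : ℂ :=
  Complex.I ^ n * (n.factorial : ℂ) *
    ∑ k ∈ Finset.range (n + 1),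
      pochC (-(n : ℂ)) k * pochC ((n : ℂ) + 1) k * pochC (1 / 2 + Complex.I * z) k /
        ((k.factorial : ℂ)) ^ 3

/-!
Write `S_n(w) = ∑_k a_{n,k} (w)_k` with `a_{n,k} = (-n)_k (n+1)_k / k!³`, so that
`p_n(z) = iⁿ n! S_n(1/2 + iz)`. A contiguous relation between `a_{c+2,k+1}`, `a_{c+1,k+1}`,
`a_{c,k+1}` and `a_{c+1,k}`, combined with `w (w)_k = (w)_{k+1} - k (w)_k`, makes the coefficients
of `(w)_k` in `(n+2)² S_{n+2} - (2n+3)(1-2w) S_{n+1} - (n+1)² S_n` telescope to zero. Since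
`(n+2)_{n+1} = 2(2n+1) (n+1)_n`, the normalising factors `n!/(n+1)_n · iⁿ n!` have ratio
`i (n+1)² / (2(2n+1))`, and they turn this recurrence into the monic one defining `ϱ_n`.
-/

open Finset

lemma pochC_zero (a : ℂ) : pochC a 0 = 1 := prod_range_zero _

lemma pochC_succ_right (a : ℂ) (k : ℕ) : pochC a (k + 1) = pochC a k * (a + k) :=
  prod_range_succ _ _

lemma pochC_succ_left (a : ℂ) (k : ℕ) : pochC a (k + 1) = a * pochC (a + 1) k := by
  rw [pochC, prod_range_succ', pochC]
  push_cast
  simp only [add_zero, ← add_assoc, add_right_comm a _ 1, mul_comm]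

lemma mul_pochC_add_one_succ (a : ℂ) (k : ℕ) :
    a * pochC (a + 1) (k + 1) = pochC a k * (a + k) * (a + k + 1) := by
  rw [← pochC_succ_left, pochC_succ_right, pochC_succ_right]
  push_cast
  ring

noncomputable def hahnCoeff (c : ℂ) (k : ℕ) : ℂ :=
  pochC (-c) k * pochC (c + 1) k / (k.factorial : ℂ) ^ 3

lemma hahnCoeff_zero (c : ℂ) : hahnCoeff c 0 = 1 := by simp [hahnCoeff, pochC_zero]

lemma hahnCoeff_natCast_eq_zero {n k : ℕ} (h : n < k) : hahnCoeff n k = 0 := by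
  have : pochC (-(n : ℂ)) k = 0 := prod_eq_zero (mem_range.mpr h) (neg_add_cancel _)
  simp [hahnCoeff, this]

lemma hahnCoeff_contiguous (c : ℂ) (k : ℕ) :
    (c + 2) ^ 2 * hahnCoeff (c + 2) (k + 1) =
      (2 * c + 3) * (2 * k + 3) * hahnCoeff (c + 1) (k + 1) + (c + 1) ^ 2 * hahnCoeff c (k + 1)
        - 2 * (2 * c + 3) * hahnCoeff (c + 1) k := by
  set P := pochC (-(c + 1)) k
  set Q := pochC (c + 2) k
  have hA : pochC (-(c + 2)) (k + 1) = -(c + 2) * P := by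
    rw [pochC_succ_left, show -(c + 2) + 1 = -(c + 1) by ring]
  have hB : (c + 2) * pochC (c + 3) (k + 1) = Q * (c + 2 + k) * (c + 2 + k + 1) := by
    rw [← mul_pochC_add_one_succ, show c + 2 + 1 = c + 3 by ring]
  have hC : pochC (-(c + 1)) (k + 1) = P * (-(c + 1) + k) := pochC_succ_right _ _
  have hD : pochC (c + 2) (k + 1) = Q * (c + 2 + k) := pochC_succ_right _ _
  have hE : -(c + 1) * pochC (-c) (k + 1) = P * (-(c + 1) + k) * (-(c + 1) + k + 1) := by
    rw [← mul_pochC_add_one_succ, show -(c + 1) + 1 = -c by ring]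
  have hF : pochC (c + 1) (k + 1) = (c + 1) * Q := by
    rw [pochC_succ_left, show c + 1 + 1 = c + 2 by ring]
  have hfact : ((k + 1).factorial : ℂ) = (k + 1) * k.factorial := by
    push_cast [Nat.factorial_succ]; ring
  have hk : (k.factorial : ℂ) ≠ 0 := Nat.cast_ne_zero.mpr k.factorial_ne_zero
  have hk1 : (k : ℂ) + 1 ≠ 0 := Nat.cast_add_one_ne_zero k
  simp only [hahnCoeff, show c + 2 + 1 = c + 3 by ring, show c + 1 + 1 = c + 2 by ring,
    hA, hC, hD, hF, hfact]
  field_simp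
  linear_combination (-(c + 2) ^ 2 * P) * hB + ((c + 1) ^ 2 * Q) * hE

noncomputable def hahnSum (n : ℕ) (w : ℂ) : ℂ :=
  ∑ k ∈ range (n + 1), hahnCoeff n k * pochC w k

lemma hahnSum_eq_sum_range {n N : ℕ} (h : n + 1 ≤ N) (w : ℂ) :
    hahnSum n w = ∑ k ∈ range N, hahnCoeff n k * pochC w k :=
  (eventually_constant_sum (fun k hk => by rw [hahnCoeff_natCast_eq_zero hk, zero_mul]) h).symm

lemma hahnSum_succ_succ (m : ℕ) (w : ℂ) :
    ((m : ℂ) + 2) ^ 2 * hahnSum (m + 2) w =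
      (2 * m + 3) * (1 - 2 * w) * hahnSum (m + 1) w + ((m : ℂ) + 1) ^ 2 * hahnSum m w := by
  set d : ℕ → ℂ := fun k => 2 * (2 * m + 3) * hahnCoeff (m + 1) k * pochC w (k + 1)
  set e : ℕ → ℂ := fun k => (((m : ℂ) + 2) ^ 2 * hahnCoeff (m + 2) k
    - (2 * m + 3) * (1 - 2 * w) * hahnCoeff (m + 1) k - ((m : ℂ) + 1) ^ 2 * hahnCoeff m k)
      * pochC w k
  have he0 : e 0 = d 0 := by
    simp only [e, d, hahnCoeff_zero, pochC_zero, pochC_succ_right, Nat.cast_zero]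
    ring
  have he_succ : ∀ k, e (k + 1) = d (k + 1) - d k := by
    intro k
    simp only [e, d]
    rw [hahnCoeff_contiguous, pochC_succ_right w (k + 1)]
    push_cast
    ring
  have hd : d (m + 2) = 0 := by
    simp only [d]
    rw [show (m : ℂ) + 1 = ((m + 1 : ℕ) : ℂ) by push_cast; rfl,
      hahnCoeff_natCast_eq_zero (by omega)]
    ring
  rw [hahnSum_eq_sum_range (N := m + 3) (by omega), hahnSum_eq_sum_range (N := m + 3) (by omega),
    hahnSum_eq_sum_range (N := m + 3) (by omega), ← sub_eq_zero]
  calc _ = ∑ k ∈ range (m + 3), e k := by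
          push_cast
          rw [mul_sum, mul_sum, mul_sum, ← sum_add_distrib, ← sum_sub_distrib]
          exact sum_congr rfl fun k _ => by ring
    _ = d (m + 2) := by
          rw [sum_range_succ', he0, sum_congr rfl fun k _ => he_succ k, sum_range_sub]
          ring
    _ = 0 := hd

noncomputable def monicHahnHalf (n : ℕ) (z : ℂ) : ℂ :=
  (n.factorial : ℂ) / pochC ((n : ℂ) + 1) n * continuousHahnHalf n z

noncomputable def monicHahnScale (n : ℕ) : ℂ :=
  (n.factorial : ℂ) / pochC ((n : ℂ) + 1) n * (Complex.I ^ n * n.factorial)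

lemma monicHahnHalf_eq (n : ℕ) (z : ℂ) :
    monicHahnHalf n z = monicHahnScale n * hahnSum n (1 / 2 + Complex.I * z) := by
  simp only [monicHahnHalf, continuousHahnHalf, monicHahnScale, hahnSum, hahnCoeff, mul_sum]
  exact sum_congr rfl fun k _ => by ring

lemma pochC_natCast_add_two (n : ℕ) :
    pochC ((n : ℂ) + 2) (n + 1) = 2 * (2 * n + 1) * pochC ((n : ℂ) + 1) n := by
  have h := mul_pochC_add_one_succ ((n : ℂ) + 1) n
  rw [show (n : ℂ) + 1 + 1 = n + 2 by ring] at h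
  refine mul_left_cancel₀ (Nat.cast_add_one_ne_zero n) (h.trans ?_)
  ring

lemma monicHahnScale_succ (n : ℕ) :
    monicHahnScale (n + 1) =
      Complex.I * ((n : ℂ) + 1) ^ 2 / (2 * (2 * n + 1)) * monicHahnScale n := by
  rw [monicHahnScale, monicHahnScale, Nat.factorial_succ]
  push_cast
  rw [show (n : ℂ) + 1 + 1 = n + 2 by ring, pochC_natCast_add_two]
  simp only [div_eq_mul_inv, mul_inv]
  ring

lemma monicHahnHalf_succ_succ (m : ℕ) (z : ℂ) :
    monicHahnHalf (m + 2) z = z * monicHahnHalf (m + 1) z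
      - ((m : ℂ) + 1) ^ 4 / (4 * (2 * ((m : ℂ) + 1) + 1) * (2 * ((m : ℂ) + 1) - 1))
        * monicHahnHalf m z := by
  have hrec := hahnSum_succ_succ m (1 / 2 + Complex.I * z)
  have h2m1 : (m : ℂ) * 2 + 1 ≠ 0 := by norm_cast
  have h2m3 : (m : ℂ) * 2 + 3 ≠ 0 := by norm_cast
  have hm2 : (m : ℂ) + 2 ≠ 0 := by norm_cast
  rw [monicHahnHalf_eq, monicHahnHalf_eq, monicHahnHalf_eq, monicHahnScale_succ (m + 1),
    monicHahnScale_succ m]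
  push_cast
  rw [show (m : ℂ) + 1 + 1 = m + 2 by ring, show 2 * ((m : ℂ) + 1) + 1 = 2 * m + 3 by ring,
    show 2 * ((m : ℂ) + 1) - 1 = 2 * m + 1 by ring]
  set w := 1 / 2 + Complex.I * z
  field_simp
  linear_combination (4 * Complex.I ^ 2 * monicHahnScale m) * hrec
    + (4 * monicHahnScale m * (((m : ℂ) + 1) ^ 2 * hahnSum m w
      - 2 * Complex.I * (2 * m + 3) * z * hahnSum (m + 1) w)) * Complex.I_sq

lemma monicHahnHalf_zero (z : ℂ) : monicHahnHalf 0 z = 1 := by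
  simp [monicHahnHalf, continuousHahnHalf, pochC_zero]

lemma monicHahnHalf_one (z : ℂ) : monicHahnHalf 1 z = z := by
  rw [monicHahnHalf, continuousHahnHalf, sum_range_succ, sum_range_one]
  norm_num [pochC]
  linear_combination (-z) * Complex.I_sq

/-- the monic orthogonal polynomials `ϱ_n` for the Bernoulli
polynomial moments, defined by the recurrence
`ϱ_{n+1} = (y - x + 1/2) ϱ_n - (n⁴/(4(2n+1)(2n-1))) ϱ_{n-1}`,
are given by `ϱ_n(y) = (n!/(n+1)_n) p_n(y - x + 1/2; 1/2,1/2,1/2,1/2)`,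
where `(n+1)_n = (2n)!/n!`. -/
theorem stmt_11 (x : ℝ)
    (ϱ : ℕ → ℝ → ℝ)
    (hϱ0 : ∀ y : ℝ, ϱ 0 y = 1)
    (hϱ1 : ∀ y : ℝ, ϱ 1 y = y - x + 1 / 2)
    (hϱrec : ∀ n : ℕ, 1 ≤ n → ∀ y : ℝ,
      ϱ (n + 1) y = (y - x + 1 / 2) * ϱ n y
        - ((n : ℝ) ^ 4 / (4 * (2 * (n : ℝ) + 1) * (2 * (n : ℝ) - 1))) * ϱ (n - 1) y) :
    ∀ (n : ℕ) (y : ℝ),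
      (ϱ n y : ℂ) = ((n.factorial : ℂ) / pochC ((n : ℂ) + 1) n) *
        continuousHahnHalf n ((y : ℂ) - (x : ℂ) + 1 / 2) := by
  suffices h : ∀ n y, (ϱ n y : ℂ) = monicHahnHalf n ((y : ℂ) - x + 1 / 2) from h
  intro n
  induction n using Nat.twoStepInduction with
  | zero => simp [hϱ0, monicHahnHalf_zero]
  | one => simp [hϱ1, monicHahnHalf_one]
  | more n ih0 ih1 =>
    intro y
    rw [hϱrec (n + 1) (Nat.le_add_left 1 n) y, Nat.add_sub_cancel, monicHahnHalf_succ_succ,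
      ← ih0, ← ih1]
    push_cast
    ring
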